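/- arXiv:1708.08112 — 3 statements merged into one kernel-verified Lean document; each statement's English description precedes it below -/
import Mathlib

section
/- Let a, b > 0 and let (k_n), (j_n) be sequences of positive integers with k_n → ∞, j_n → ∞ and k_n/j_n → a/b. Then the normalized nodal length ((k_n−1)b + (j_n−1)a)/√((πk_n/a)² + (πj_n/b)²) converges to (√2/π)·ab as n → ∞. Combined with the universal upper bound H¹(N(u_{k,j}))/√λ_{k,j} ≤ (√2/π)ab, this shows that the limsup of H¹(N(u))/√λ over all Dirichlet eigenfunctions of the rectangle as λ → ∞ equals (√2/π)·Area(R). -/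
/-!
The nodal length `(k-1)b + (j-1)a` is at most `kb + ja = (ab/π)(x + y)` with `x = πk/a`,
`y = πj/b`, and `x + y ≤ √2 · √(x² + y²) = √2 · √λ`, so the normalized nodal length never
exceeds `(√2/π)·ab`. Equality in the last step means `x = y`, i.e. `k/j = a/b`; along
such sequences the lost `a + b` is negligible against `√λ ~ j`, so the bound is attained in the
limit, and it is therefore the limsup.
-/

open Filter Topology Real

noncomputable section

def rectEigenvalue (a b k j : ℝ) : ℝ := (π * k / a) ^ 2 + (π * j / b) ^ 2

def rectNodalLength (a b k j : ℝ) : ℝ := (k - 1) * b + (j - 1) * a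

end

theorem limsup_eq_of_tendsto_comp_of_eventually_le {ι α β : Type*}
    [ConditionallyCompleteLinearOrder β] [TopologicalSpace β] [OrderTopology β]
    {f : α → β} {F : Filter α} {v : ι → α} {G : Filter ι} [G.NeBot] {L : β}
    (hv : Tendsto v G F) (hfv : Tendsto (f ∘ v) G (𝓝 L)) (hle : ∀ᶠ x in F, f x ≤ L) :
    limsup f F = L := by
  have hcobdd : G.IsCoboundedUnder (· ≤ ·) (f ∘ v) := hfv.isCoboundedUnder_le
  refine le_antisymm (limsup_le_of_le (hcobdd.mono (map_mono hv)) hle) ?_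
  rw [← hfv.limsup_eq]
  exact hv.limsup_comp_le_limsup hcobdd (isBoundedUnder_of_eventually_le hle)

section

variable {a b : ℝ}

theorem rectNodalLength_div_sqrt_rectEigenvalue_le (ha : 0 < a) (hb : 0 < b) (k j : ℝ) :
    rectNodalLength a b k j / √(rectEigenvalue a b k j) ≤ √2 / π * (a * b) := by
  refine div_le_of_le_mul₀ (sqrt_nonneg _) (by positivity) ?_
  set x := π * k / a
  set y := π * j / b
  have hxy : x + y ≤ √2 * √(x ^ 2 + y ^ 2) := by
    rw [← sqrt_mul zero_le_two]
    exact le_sqrt_of_sq_le (by nlinarith [sq_nonneg (x - y)])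
  calc rectNodalLength a b k j ≤ k * b + j * a := by
        unfold rectNodalLength; linarith
    _ = a * b / π * (x + y) := by simp only [x, y]; field_simp
    _ ≤ a * b / π * (√2 * √(x ^ 2 + y ^ 2)) := by gcongr
    _ = √2 / π * (a * b) * √(rectEigenvalue a b k j) := by unfold rectEigenvalue; ring

theorem rectNodalLength_div_sqrt_rectEigenvalue_eq {k j : ℝ} (hj : 0 < j) :
    rectNodalLength a b k j / √(rectEigenvalue a b k j)
      = (k / j * b + a - (a + b) / j) / √(rectEigenvalue a b (k / j) 1) := by
  have hscale : rectEigenvalue a b k j = j ^ 2 * rectEigenvalue a b (k / j) 1 := by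
    unfold rectEigenvalue; field_simp
  rw [hscale, sqrt_mul (sq_nonneg j), sqrt_sq hj.le, ← div_div]
  congr 1
  unfold rectNodalLength; field_simp; ring

theorem sqrt_rectEigenvalue_div_one (ha : 0 < a) (hb : 0 < b) :
    √(rectEigenvalue a b (a / b) 1) = √2 * (π / b) := by
  have h : rectEigenvalue a b (a / b) 1 = 2 * (π / b) ^ 2 := by
    unfold rectEigenvalue; field_simp; ring
  rw [h, sqrt_mul zero_le_two, sqrt_sq (by positivity)]

theorem tendsto_rectNodalLength_div_sqrt_rectEigenvalue {ι : Type*} {l : Filter ι}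
    {k j : ι → ℝ} (ha : 0 < a) (hb : 0 < b) (hj : Tendsto j l atTop)
    (hkj : Tendsto (fun i => k i / j i) l (𝓝 (a / b))) :
    Tendsto (fun i => rectNodalLength a b (k i) (j i) / √(rectEigenvalue a b (k i) (j i)))
      l (𝓝 (√2 / π * (a * b))) := by
  have hnum : Tendsto (fun i => k i / j i * b + a - (a + b) / j i) l (𝓝 (a / b * b + a - 0)) :=
    ((hkj.mul_const b).add_const a).sub (tendsto_const_nhds.div_atTop hj)
  have hcont : Continuous fun r => √(rectEigenvalue a b r 1) := by
    unfold rectEigenvalue; fun_prop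
  have hden := (hcont.tendsto (a / b)).comp hkj
  rw [sqrt_rectEigenvalue_div_one ha hb] at hden
  have hlim : (a / b * b + a - 0) / (√2 * (π / b)) = √2 / π * (a * b) := by
    field_simp
    linear_combination (-a) * sq_sqrt (zero_le_two : (0:ℝ) ≤ 2)
  rw [← hlim]
  refine (hnum.div hden (by positivity)).congr' ?_
  filter_upwards [hj.eventually_gt_atTop 0] with i hi
  exact (rectNodalLength_div_sqrt_rectEigenvalue_eq hi).symm

theorem tendsto_rectEigenvalue_atTop {ι : Type*} {l : Filter ι} {k j : ι → ℝ} (hb : 0 < b)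
    (hj : Tendsto j l atTop) : Tendsto (fun i => rectEigenvalue a b (k i) (j i)) l atTop := by
  have hy : Tendsto (fun i => (π * j i / b) ^ 2) l atTop :=
    (tendsto_pow_atTop two_ne_zero).comp ((hj.const_mul_atTop pi_pos).atTop_div_const hb)
  exact tendsto_atTop_mono (fun i => le_add_of_nonneg_left (sq_nonneg _)) hy

end

theorem stmt_7_general (a b : ℝ) (ha : 0 < a) (hb : 0 < b)
    (kn jn : ℕ → ℕ)
    (hj : Tendsto jn atTop atTop)
    (hratio : Tendsto (fun n => (kn n : ℝ) / (jn n : ℝ)) atTop (𝓝 (a / b))) :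
    Tendsto (fun n =>
        (((kn n : ℝ) - 1) * b + ((jn n : ℝ) - 1) * a) /
          Real.sqrt ((Real.pi * kn n / a) ^ 2 + (Real.pi * jn n / b) ^ 2))
      atTop (𝓝 (Real.sqrt 2 / Real.pi * (a * b)))
    ∧ limsup
        (fun p : ℕ × ℕ =>
          (((p.1 : ℝ) - 1) * b + ((p.2 : ℝ) - 1) * a) /
            Real.sqrt ((Real.pi * p.1 / a) ^ 2 + (Real.pi * p.2 / b) ^ 2))
        ((comap (fun p : ℕ × ℕ => (Real.pi * p.1 / a) ^ 2 + (Real.pi * p.2 / b) ^ 2) atTop)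
          ⊓ 𝓟 {p : ℕ × ℕ | 0 < p.1 ∧ 0 < p.2})
        = Real.sqrt 2 / Real.pi * (a * b) := by
  have hjR : Tendsto (fun n => (jn n : ℝ)) atTop atTop := tendsto_natCast_atTop_atTop.comp hj
  have hseq := tendsto_rectNodalLength_div_sqrt_rectEigenvalue ha hb hjR hratio
  have hpos : ∀ᶠ n in atTop, 0 < kn n ∧ 0 < jn n := by
    filter_upwards [hratio.eventually (lt_mem_nhds (div_pos ha hb)), hj.eventually_gt_atTop 0]
      with n hkj hjn
    refine ⟨Nat.pos_of_ne_zero fun hk0 => ?_, hjn⟩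
    simp [hk0] at hkj
  have hv : Tendsto (fun n => (kn n, jn n)) atTop
      ((comap (fun p : ℕ × ℕ => rectEigenvalue a b p.1 p.2) atTop)
        ⊓ 𝓟 {p : ℕ × ℕ | 0 < p.1 ∧ 0 < p.2}) :=
    tendsto_inf.2 ⟨tendsto_comap_iff.2 (tendsto_rectEigenvalue_atTop hb hjR),
      tendsto_principal.2 hpos⟩
  refine ⟨hseq, limsup_eq_of_tendsto_comp_of_eventually_le hv hseq ?_⟩
  exact Eventually.of_forall fun p => rectNodalLength_div_sqrt_rectEigenvalue_le ha hb p.1 p.2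

/-- If `k_n, j_n → ∞` with `k_n/j_n → a/b`, then the normalized nodal lengths
`((k_n−1)b + (j_n−1)a)/√λ_{k_n,j_n}` converge to `(√2/π)·ab`; combined with the
universal upper bound, the limsup of `H¹(N(u))/√λ` over all Dirichlet eigenfunctions
of the rectangle as `λ → ∞` equals `(√2/π)·Area(R) = (√2/π)·ab`. -/
theorem stmt_7 (a b : ℝ) (ha : 0 < a) (hb : 0 < b)
    (kn jn : ℕ → ℕ) (hkpos : ∀ n, 0 < kn n) (hjpos : ∀ n, 0 < jn n)
    (hk : Tendsto kn atTop atTop) (hj : Tendsto jn atTop atTop)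
    (hratio : Tendsto (fun n => (kn n : ℝ) / (jn n : ℝ)) atTop (𝓝 (a / b))) :
    Tendsto (fun n =>
        (((kn n : ℝ) - 1) * b + ((jn n : ℝ) - 1) * a) /
          Real.sqrt ((Real.pi * kn n / a) ^ 2 + (Real.pi * jn n / b) ^ 2))
      atTop (𝓝 (Real.sqrt 2 / Real.pi * (a * b)))
    ∧ limsup
        (fun p : ℕ × ℕ =>
          (((p.1 : ℝ) - 1) * b + ((p.2 : ℝ) - 1) * a) /
            Real.sqrt ((Real.pi * p.1 / a) ^ 2 + (Real.pi * p.2 / b) ^ 2))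
        ((comap (fun p : ℕ × ℕ => (Real.pi * p.1 / a) ^ 2 + (Real.pi * p.2 / b) ^ 2) atTop)
          ⊓ 𝓟 {p : ℕ × ℕ | 0 < p.1 ∧ 0 < p.2})
        = Real.sqrt 2 / Real.pi * (a * b) :=
  stmt_7_general a b ha hb kn jn hj hratio
end

section
/- Let C > 0 and let f : ℕ × ℕ → ℝ be a function satisfying k + πl − C ≤ f(k,l) ≤ (π/2)k + πl + C for all integers k ≥ 0 and l ≥ 1. Then there exists N such that for all k ≥ N and all s ≥ N, the sum Σ_{l=1}^{s−1} f(k,l)/f(k,s) is at least s/2. -/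
/-!
Bound each term from below by `(k - C + π l) / f(k, s)` and the denominator from above by
`(π/2) k + π s + C`. Summing the arithmetic progression gives a numerator of order
`k s + π s² / 2`, against `s/2` times a denominator of order `π k s / 4 + π s² / 2`: the
`π s² / 2` terms cancel, and since `1 > π / 4` the `k s` term wins once `k` and `s` are large.
-/

open Finset

theorem sum_Icc_one_affine (a b : ℝ) (n : ℕ) :
    ∑ l ∈ Icc 1 n, (a + b * l) = n * a + b * (n * (n + 1) / 2) := by
  induction n with
  | zero => simp
  | succ n ih =>
    rw [sum_Icc_succ_top (by omega), ih]
    push_cast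
    ring

theorem le_sum_Icc_div_of_affine_le {g : ℕ → ℝ} {n : ℕ} {a b d D x : ℝ}
    (hg : ∀ l, 1 ≤ l → a + b * l ≤ g l) (hd : 0 < d) (hdD : d ≤ D) (hx : 0 ≤ x)
    (hxD : x * D ≤ n * a + b * (n * (n + 1) / 2)) :
    x ≤ ∑ l ∈ Icc 1 n, g l / d := by
  rw [← sum_div, le_div_iff₀ hd]
  calc x * d ≤ x * D := mul_le_mul_of_nonneg_left hdD hx
    _ ≤ ∑ l ∈ Icc 1 n, (a + b * l) := by rwa [sum_Icc_one_affine]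
    _ ≤ ∑ l ∈ Icc 1 n, g l := sum_le_sum fun l hl => hg l (mem_Icc.1 hl).1

theorem half_succ_mul_le_of_large {C k : ℝ} {n : ℕ} (hC : 0 ≤ C) (hk : 16 + 15 * C ≤ k)
    (hn : 9 ≤ n) :
    (n + 1) / 2 * (Real.pi / 2 * k + Real.pi * (n + 1) + C) ≤
      n * (k - C) + Real.pi * (n * (n + 1) / 2) := by
  have hπ : 0 ≤ 3.2 - Real.pi := by linarith [Real.pi_lt_d2]
  have hk₀ : (0 : ℝ) ≤ k := by linarith
  have hn₀ : (9 : ℝ) ≤ n := by exact_mod_cast hn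
  -- with `s = n + 1`: `1 - π/4 > 1/5`, and `k s / 5` absorbs the linear terms once `s ≥ 10`
  -- and `k ≥ 16 + 15 C`
  nlinarith [mul_nonneg (mul_nonneg hπ hk₀) (by linarith : (0 : ℝ) ≤ n + 1),
    mul_nonneg hπ (by linarith : (0 : ℝ) ≤ n + 1),
    mul_nonneg hk₀ (by linarith : (0 : ℝ) ≤ n - 9),
    mul_nonneg (by linarith : (0 : ℝ) ≤ n + 1) (sub_nonneg.2 hk)]

/-- If `f : ℕ × ℕ → ℝ` satisfies `k + πl − C ≤ f(k,l) ≤ (π/2)k + πl + C` for all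
`k ≥ 0` and `l ≥ 1`, then there is `N` such that for all `k ≥ N` and `s ≥ N` one has
`Σ_{l=1}^{s−1} f(k,l)/f(k,s) ≥ s/2`. -/
theorem stmt_10 (C : ℝ) (hC : 0 < C) (f : ℕ × ℕ → ℝ)
    (hf : ∀ k l : ℕ, 1 ≤ l →
      (k : ℝ) + Real.pi * l - C ≤ f (k, l) ∧ f (k, l) ≤ Real.pi / 2 * k + Real.pi * l + C) :
    ∃ N : ℕ, ∀ k ≥ N, ∀ s ≥ N,
      (s : ℝ) / 2 ≤ ∑ l ∈ Finset.Icc 1 (s - 1), f (k, l) / f (k, s) := by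
  obtain ⟨N, hN⟩ := exists_nat_ge (16 + 15 * C)
  refine ⟨N + 10, fun k hk s hs => ?_⟩
  obtain ⟨n, rfl⟩ : ∃ n, s = n + 1 := ⟨s - 1, by omega⟩
  have hk' : 16 + 15 * C ≤ k := hN.trans (by exact_mod_cast (by omega : N ≤ k))
  have hfs := hf k (n + 1) le_add_self
  push_cast at hfs ⊢
  have hpos : 0 < f (k, n + 1) := by nlinarith [Real.pi_pos]
  refine le_sum_Icc_div_of_affine_le (a := k - C) (b := Real.pi) (fun l hl => ?_) hpos hfs.2
    (by positivity) (half_succ_mul_le_of_large hC.le hk' (by omega))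
  linarith [(hf k l hl).1]
end

section
/- Let C > 0 and let f : ℕ × ℕ → ℝ satisfy: (i) k + πl − C ≤ f(k,l) ≤ (π/2)k + πl + C for all integers k ≥ 0, l ≥ 1, and (ii) for each k, the sequence l ↦ f(k,l) is strictly increasing and positive. Define L(k,s) = (2π·Σ_{l=1}^{s−1} f(k,l)/f(k,s) + 2k)/f(k,s). Then for every ε > 0 there exists N such that for all k ≥ N and s ≥ N one has 1 − ε ≤ L(k,s) ≤ 2 + ε. In particular, along any sequence (k_n, s_n) with k_n → ∞ and s_n → ∞, every limit point of L(k_n, s_n) lies in the interval [1, 2]. -/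
/-!
Write `F = f(k,s)` and `T = ∑_{1 ≤ l < s} f(k,l)`, so that `L(k,s) = (2π T/F + 2k)/F`, which
increases in `T` and decreases in `F`. Monotonicity gives `T ≤ (s-1) F`, and with `F ≥ k + πs - C` this yields
`L ≤ 2 + 2C/(k + πs - C)`. In the other direction, summing the lower bound gives
`T ≥ (s-1)(k-C) + π s(s-1)/2`; inserting this and `F ≤ (π/2)k + πs + C` reduces `L ≥ 1` to a
polynomial inequality whose leading part `(π/2)(2 - π/2) k² + (4 - π) k πs` is positive, so it holds
once `k` is large compared with `C`.
-/

open Filter Topology Real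

lemma sum_Icc_one_natCast (m : ℕ) : ∑ l ∈ Finset.Icc 1 m, (l : ℝ) = m * (m + 1) / 2 := by
  induction m with
  | zero => simp
  | succ n ih =>
    rw [Finset.sum_Icc_succ_top (by omega), ih]
    push_cast
    ring

lemma sum_Icc_one_le_mul_of_monotone {g : ℕ → ℝ} (hg : Monotone g) (m : ℕ) :
    ∑ l ∈ Finset.Icc 1 m, g l ≤ m * g (m + 1) :=
  calc ∑ l ∈ Finset.Icc 1 m, g l ≤ ∑ _l ∈ Finset.Icc 1 m, g (m + 1) :=
        Finset.sum_le_sum fun _ hl => hg (by grind)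
    _ = m * g (m + 1) := by simp

lemma one_le_div_of_sq_le {a b T T₀ F F₁ : ℝ} (ha : 0 ≤ a) (hb : 0 ≤ b) (hT : 0 ≤ T)
    (hT₀ : T₀ ≤ T) (hF : 0 < F) (hF₁ : F ≤ F₁) (h : F₁ ^ 2 ≤ a * T₀ + b * F₁) :
    1 ≤ (a * (T / F) + b) / F := by
  have hF₁pos : 0 < F₁ := hF.trans_le hF₁
  calc 1 ≤ (a * (T₀ / F₁) + b) / F₁ := by
        rw [le_div_iff₀ hF₁pos, one_mul, mul_div_assoc', ← sub_nonneg]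
        have : a * T₀ / F₁ + b - F₁ = (a * T₀ + b * F₁ - F₁ ^ 2) / F₁ := by field_simp
        rw [this]
        exact div_nonneg (by linarith) hF₁pos.le
    _ ≤ (a * (T / F₁) + b) / F₁ := by gcongr
    _ ≤ (a * (T / F) + b) / F := by gcongr

lemma div_le_div_of_le_mul {a b T m F F₀ : ℝ} (ha : 0 ≤ a) (hb : 0 ≤ b) (hm : 0 ≤ m)
    (hT : T ≤ m * F) (hF₀ : 0 < F₀) (hF : F₀ ≤ F) :
    (a * (T / F) + b) / F ≤ (a * m + b) / F₀ := by
  have hFpos : 0 < F := hF₀.trans_le hF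
  have hFnonneg := hFpos.le
  calc (a * (T / F) + b) / F ≤ (a * m + b) / F := by
        gcongr
        rwa [div_le_iff₀ hFpos]
    _ ≤ (a * m + b) / F₀ := by gcongr

/-- Here `m = s - 1`. The difference of the two sides is
`π(m+1)·((4-π)k - 4C - π) + k·(π(4-π)/4·k - 2π - (π-2)C) + 2πC - C²`. -/
lemma sq_le_of_ten_add_six_mul_le {C k m : ℝ} (hC : 0 ≤ C) (hk : 10 + 6 * C ≤ k) (hm : 0 ≤ m) :
    (π / 2 * k + π * (m + 1) + C) ^ 2
      ≤ 2 * π * (m * (k - C) + π * (m * (m + 1) / 2)) + 2 * k * (π / 2 * k + π * (m + 1) + C) := by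
  have hπ₁ : 3 < π := pi_gt_three
  have hπ₂ : π < 3.15 := pi_lt_d2
  have hb : 0 ≤ π * (m + 1) := by positivity
  have hkC : C ≤ k := by linarith
  have h₁ : 0 ≤ (4 - π) * k - 4 * C - π := by nlinarith
  have h₂ : 0 ≤ π * (4 - π) / 4 * k - 2 * π - (π - 2) * C - C := by
    nlinarith [mul_nonneg (sub_nonneg.2 hπ₁.le) (sub_nonneg.2 hπ₂.le)]
  nlinarith [mul_nonneg hb h₁, mul_nonneg (hC.trans hkC) h₂, mul_le_mul_of_nonneg_left hkC hC]

lemma mem_Icc_of_mapClusterPt {ι : Type*} {l : Filter ι} {u : ι → ℝ} {a b x : ℝ}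
    (hu : ∀ ε > 0, ∀ᶠ n in l, a - ε ≤ u n ∧ u n ≤ b + ε) (hx : MapClusterPt x l u) :
    x ∈ Set.Icc a b := by
  have h (ε : ℝ) (hε : 0 < ε) : x ∈ Set.Icc (a - ε) (b + ε) :=
    isClosed_Icc.mem_of_mapClusterPt hx (hu ε hε)
  exact ⟨le_of_forall_pos_le_add fun ε hε => by linarith [(h ε hε).1],
    le_of_forall_pos_le_add fun ε hε => (h ε hε).2⟩

noncomputable def nodalLength (f : ℕ × ℕ → ℝ) (k s : ℕ) : ℝ :=
  (2 * π * ∑ l ∈ Finset.Icc 1 (s - 1), f (k, l) / f (k, s) + 2 * k) / f (k, s)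

section

variable {C : ℝ} {f : ℕ × ℕ → ℝ}
  (hbound : ∀ k l : ℕ, 1 ≤ l → (k : ℝ) + π * l - C ≤ f (k, l) ∧ f (k, l) ≤ π / 2 * k + π * l + C)
include hbound

lemma le_sum_Icc_one (k m : ℕ) :
    m * (k - C) + π * (m * (m + 1) / 2) ≤ ∑ l ∈ Finset.Icc 1 m, f (k, l) :=
  calc m * (k - C) + π * (m * (m + 1) / 2) = ∑ l ∈ Finset.Icc 1 m, ((k : ℝ) + π * l - C) := by
        simp only [Finset.sum_sub_distrib, Finset.sum_add_distrib, ← Finset.mul_sum,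
          sum_Icc_one_natCast, Finset.sum_const, Nat.card_Icc, add_tsub_cancel_right, nsmul_eq_mul]
        ring
    _ ≤ ∑ l ∈ Finset.Icc 1 m, f (k, l) :=
        Finset.sum_le_sum fun l hl => (hbound k l (Finset.mem_Icc.1 hl).1).1

lemma one_le_nodalLength (hC : 0 ≤ C) (hpos : ∀ k l : ℕ, 0 < f (k, l)) {k : ℕ}
    (hk : 10 + 6 * C ≤ k) (m : ℕ) : 1 ≤ nodalLength f k (m + 1) := by
  have hF := (hbound k (m + 1) (by omega)).2
  push_cast at hF
  rw [nodalLength, Nat.add_sub_cancel, ← Finset.sum_div]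
  exact one_le_div_of_sq_le (by positivity) (by positivity)
    (Finset.sum_nonneg fun l _ => (hpos k l).le) (le_sum_Icc_one hbound k m) (hpos k (m + 1)) hF
    (sq_le_of_ten_add_six_mul_le hC hk m.cast_nonneg)

lemma nodalLength_le_two_add (hC : 0 ≤ C) {k : ℕ} (hmono : Monotone fun l => f (k, l)) {ε : ℝ}
    (hε : 0 < ε) (hk : C + 2 * C / ε ≤ k) (m : ℕ) : nodalLength f k (m + 1) ≤ 2 + ε := by
  have hF := (hbound k (m + 1) (by omega)).1
  push_cast at hF
  have hπm : 0 < π * (m + 1) := by positivity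
  have hF₀ : 2 * C / ε ≤ k + π * (m + 1) - C := by linarith
  have hF₀pos : 0 < k + π * (m + 1) - C := by
    have : 0 ≤ 2 * C / ε := by positivity
    linarith
  calc nodalLength f k (m + 1)
      = (2 * π * ((∑ l ∈ Finset.Icc 1 m, f (k, l)) / f (k, m + 1)) + 2 * k) / f (k, m + 1) := by
        rw [nodalLength, Nat.add_sub_cancel, ← Finset.sum_div]
    _ ≤ (2 * π * m + 2 * k) / (k + π * (m + 1) - C) :=
        div_le_div_of_le_mul (by positivity) (by positivity) m.cast_nonneg
          (sum_Icc_one_le_mul_of_monotone hmono m) hF₀pos hF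
    _ ≤ 2 + ε := by
        rw [div_le_iff₀ hF₀pos]
        linarith [pi_pos, (div_le_iff₀ hε).1 hF₀]

lemma exists_ge_one_sub_le_nodalLength_le_two_add (hC : 0 ≤ C)
    (hmono : ∀ k : ℕ, Monotone fun l => f (k, l)) (hpos : ∀ k l : ℕ, 0 < f (k, l)) {ε : ℝ}
    (hε : 0 < ε) :
    ∃ N : ℕ, ∀ k ≥ N, ∀ s ≥ N, 1 - ε ≤ nodalLength f k s ∧ nodalLength f k s ≤ 2 + ε := by
  refine ⟨⌈10 + 6 * C + 2 * C / ε⌉₊ + 1, fun k hk s hs => ?_⟩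
  obtain ⟨m, rfl⟩ : ∃ m, s = m + 1 := ⟨s - 1, by omega⟩
  have hk' : 10 + 6 * C + 2 * C / ε ≤ k :=
    (Nat.le_ceil _).trans (by exact_mod_cast (Nat.le_succ _).trans hk)
  have hCε : 0 ≤ 2 * C / ε := by positivity
  exact ⟨by linarith [one_le_nodalLength hbound hC hpos (k := k) (by linarith) m],
    nodalLength_le_two_add hbound hC (hmono k) hε (by linarith) m⟩

end

/-- Abstract Case 3 of the disc theorem: if `f : ℕ × ℕ → ℝ` satisfies
`k + πl − C ≤ f(k,l) ≤ (π/2)k + πl + C` for `k ≥ 0`, `l ≥ 1`, and for each `k` the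
sequence `l ↦ f(k,l)` is strictly increasing and positive, then for
`L(k,s) = (2π·Σ_{l=1}^{s−1} f(k,l)/f(k,s) + 2k)/f(k,s)` one has: for every `ε > 0`
there is `N` with `1 − ε ≤ L(k,s) ≤ 2 + ε` whenever `k, s ≥ N`; in particular, along
any sequence `(k_n, s_n)` with `k_n → ∞` and `s_n → ∞`, every limit point of
`L(k_n, s_n)` lies in `[1, 2]`. -/
theorem stmt_11 (C : ℝ) (hC : 0 < C) (f : ℕ × ℕ → ℝ)
    (hbound : ∀ k l : ℕ, 1 ≤ l →
      (k : ℝ) + Real.pi * l - C ≤ f (k, l) ∧ f (k, l) ≤ Real.pi / 2 * k + Real.pi * l + C)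
    (hmono : ∀ k : ℕ, StrictMono fun l => f (k, l))
    (hpos : ∀ k l : ℕ, 0 < f (k, l))
    (L : ℕ → ℕ → ℝ)
    (hL : ∀ k s : ℕ, L k s =
      (2 * Real.pi * ∑ l ∈ Finset.Icc 1 (s - 1), f (k, l) / f (k, s) + 2 * k) / f (k, s)) :
    (∀ ε > (0 : ℝ), ∃ N : ℕ, ∀ k ≥ N, ∀ s ≥ N, 1 - ε ≤ L k s ∧ L k s ≤ 2 + ε)
      ∧ ∀ (kn sn : ℕ → ℕ), Tendsto kn atTop atTop → Tendsto sn atTop atTop →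
          ∀ x : ℝ, MapClusterPt x atTop (fun n => L (kn n) (sn n)) →
            x ∈ Set.Icc (1 : ℝ) 2 := by
  obtain rfl : L = nodalLength f := funext₂ hL
  have hbounds (ε : ℝ) (hε : 0 < ε) := exists_ge_one_sub_le_nodalLength_le_two_add hbound hC.le
    (fun k => (hmono k).monotone) hpos hε
  refine ⟨hbounds, fun kn sn hkn hsn x hx => mem_Icc_of_mapClusterPt (fun ε hε => ?_) hx⟩
  obtain ⟨N, hN⟩ := hbounds ε hε
  filter_upwards [hkn.eventually_ge_atTop N, hsn.eventually_ge_atTop N] with n hk hs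
  exact hN _ hk _ hs
end
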